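/- arXiv:1809.08439 — 3 statements merged into one kernel-verified Lean document; each statement's English description precedes it below -/
import Mathlib

section
/- (Desargues' theorem in the projective plane) Let A₁B₁, A₂B₂, A₃B₃ be three distinct lines through a common point O in the real projective plane, with all six points A₁,A₂,A₃,B₁,B₂,B₃ distinct from O and from each other, and A₁,A₂,A₃ (resp. B₁,B₂,B₃) not collinear with each other in degenerate ways so that the intersection points C₁₂ = A₁A₂ ∩ B₁B₂, C₁₃ = A₁A₃ ∩ B₁B₃, C₂₃ = A₂A₃ ∩ B₂B₃ exist and are unique. Then C₁₂, C₁₃, C₂₃ are collinear. -/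
/-!
Choose a representative `o` of `O`. Since `O, Aᵢ, Bᵢ` are collinear and pairwise distinct, the
representatives `aᵢ` of `Aᵢ` can be scaled so that `aᵢ - o` represents `Bᵢ`. Then `aᵢ - aⱼ` lies
on both lines `AᵢAⱼ` and `BᵢBⱼ`, and as `o, aᵢ, aⱼ` are independent, it spans their intersection
`Cᵢⱼ`. The three vectors `a₁ - a₂`, `a₁ - a₃`, `a₂ - a₃` lie in the plane spanned by
`a₁ - a₂` and `a₂ - a₃`, so `C₁₂, C₁₃, C₂₃` are collinear.
-/

open Projectivization

/-- Three points of the real projective plane are collinear iff their representative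
vectors are linearly dependent. -/
def Col (p q r : Projectivization ℝ (Fin 3 → ℝ)) : Prop :=
  ¬ LinearIndependent ℝ ![p.rep, q.rep, r.rep]

open Submodule

section LinearAlgebra

variable {R K V : Type*} [Ring R] [Field K] [AddCommGroup V] [Module R V] [Module K V]

lemma LinearIndependent.triple_iff {x y z : V} :
    LinearIndependent R ![x, y, z] ↔
      ∀ s t u : R, s • x + t • y + u • z = 0 → s = 0 ∧ t = 0 ∧ u = 0 := by
  rw [Fintype.linearIndependent_iff]
  refine ⟨fun h s t u hstu => ?_, fun h g hg i => ?_⟩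
  · have := h ![s, t, u] (by simpa [Fin.sum_univ_three] using hstu)
    exact ⟨this 0, this 1, this 2⟩
  · obtain ⟨h0, h1, h2⟩ := h (g 0) (g 1) (g 2) (by simpa [Fin.sum_univ_three] using hg)
    fin_cases i <;> assumption

lemma LinearIndependent.not_linearIndependent_triple_iff_mem_span {x y z : V}
    (h : LinearIndependent K ![x, y]) :
    ¬ LinearIndependent K ![x, y, z] ↔ z ∈ span K {x, y} := by
  have : ![x, y, z] = Fin.snoc ![x, y] z := by ext i; fin_cases i <;> rfl
  rw [this, linearIndependent_finSnoc, Matrix.range_cons_cons_empty]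
  simp [h]

lemma not_linearIndependent_of_forall_mem_span_pair {ι : Type*} [Fintype ι]
    (hι : 2 < Fintype.card ι) {f : ι → V} {x y : V} (h : ∀ i, f i ∈ span K {x, y}) :
    ¬ LinearIndependent K f := by
  classical
  intro hf
  have := linearIndependent_le_span_aux' f hf {x, y} (Set.range_subset_iff.2 h)
  have : Fintype.card ({x, y} : Set V) ≤ 2 := by
    rw [← Set.toFinset_card]; simpa using Finset.card_insert_le x {y}
  omega

lemma exists_smul_sub_smul_eq {o a b : V} (hob : LinearIndependent K ![o, b])
    (hab : LinearIndependent K ![a, b]) (h : b ∈ span K {o, a}) :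
    ∃ x y : K, x ≠ 0 ∧ y ≠ 0 ∧ x • a - y • b = o := by
  obtain ⟨α, β, rfl⟩ := mem_span_pair.1 h
  have hα : α ≠ 0 := by
    rintro rfl
    simpa using (LinearIndependent.pair_iff.1 hab β (-1) (by simp))
  have hβ : β ≠ 0 := by
    rintro rfl
    simpa using (LinearIndependent.pair_iff.1 hob α (-1) (by simp))
  refine ⟨-(β / α), -α⁻¹, by simp [hα, hβ], by simp [hα], ?_⟩
  rw [smul_add, smul_smul, smul_smul]
  match_scalars
  · field_simp
    ring
  · field_simp

lemma LinearIndependent.sub_pair_of_triple {o a a' : V} (h : LinearIndependent K ![o, a, a']) :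
    LinearIndependent K ![a - o, a' - o] := by
  refine LinearIndependent.pair_iff.2 fun s t hst => ?_
  obtain ⟨-, hs, ht⟩ := LinearIndependent.triple_iff.1 h (-(s + t)) s t
    (by rw [← hst]; module)
  exact ⟨hs, ht⟩

lemma mem_span_singleton_sub_of_mem_span_pair {o a a' c : V}
    (h : LinearIndependent K ![o, a, a']) (hc : c ∈ span K {a, a'})
    (hc' : c ∈ span K {a - o, a' - o}) : c ∈ K ∙ (a - a') := by
  obtain ⟨s, t, rfl⟩ := mem_span_pair.1 hc
  obtain ⟨s', t', hst⟩ := mem_span_pair.1 hc'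
  obtain ⟨hsum, hs, ht⟩ := LinearIndependent.triple_iff.1 h (-(s' + t')) (s' - s) (t' - t)
    (by rw [← sub_eq_zero.2 hst]; module)
  have ht : t = -s := by linear_combination -ht - hs - hsum
  exact mem_span_singleton.2 ⟨s, by rw [ht]; module⟩

lemma not_linearIndependent_of_mem_span_sub {x y z u v w : V} (hu : u ∈ K ∙ (x - y))
    (hv : v ∈ K ∙ (x - z)) (hw : w ∈ K ∙ (y - z)) : ¬ LinearIndependent K ![u, v, w] := by
  have hxz : K ∙ (x - z) ≤ span K {x - y, y - z} :=
    (span_singleton_le_iff_mem _ _).2 (mem_span_pair.2 ⟨1, 1, by module⟩)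
  refine not_linearIndependent_of_forall_mem_span_pair (x := x - y) (y := y - z) (by simp) ?_
  intro i
  fin_cases i
  · exact span_mono (by simp) hu
  · exact hxz hv
  · exact span_mono (by simp) hw

end LinearAlgebra

lemma col_mk_iff {u v w : Fin 3 → ℝ} (hu : u ≠ 0) (hv : v ≠ 0) (hw : w ≠ 0) :
    Col (mk ℝ u hu) (mk ℝ v hv) (mk ℝ w hw) ↔ ¬ LinearIndependent ℝ ![u, v, w] := by
  obtain ⟨α, hα⟩ := exists_smul_eq_mk_rep ℝ u hu
  obtain ⟨β, hβ⟩ := exists_smul_eq_mk_rep ℝ v hv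
  obtain ⟨γ, hγ⟩ := exists_smul_eq_mk_rep ℝ w hw
  rw [Col, ← hα, ← hβ, ← hγ, ← LinearIndependent.units_smul_iff ![u, v, w] ![α, β, γ]]
  congr! 2
  ext i : 1
  fin_cases i <;> rfl

lemma Col.exists_mk_eq_sub {o : Fin 3 → ℝ} (ho : o ≠ 0) {A B : Projectivization ℝ (Fin 3 → ℝ)}
    (h : Col (mk ℝ o ho) A B) (hOA : mk ℝ o ho ≠ A) (hOB : mk ℝ o ho ≠ B) (hAB : A ≠ B) :
    ∃ (a : Fin 3 → ℝ) (ha : a ≠ 0) (hb : a - o ≠ 0), mk ℝ a ha = A ∧ mk ℝ (a - o) hb = B := by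
  induction A using ind with | h a ha => ?_
  induction B using ind with | h b hb => ?_
  rw [← independent_pair_iff_ne, independent_mk_iff_LinearIndependent] at hOA hOB hAB
  rw [col_mk_iff, hOA.not_linearIndependent_triple_iff_mem_span] at h
  obtain ⟨x, y, hx, hy, rfl⟩ := exists_smul_sub_smul_eq hOB hAB h
  refine ⟨x • a, smul_ne_zero hx ha, by simpa using smul_ne_zero hy hb,
    (mk_eq_mk_iff' ℝ _ _ _ ha).2 ⟨x, rfl⟩, (mk_eq_mk_iff' ℝ _ _ _ hb).2 ⟨y, ?_⟩⟩
  simp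

lemma rep_mem_span_sub_of_col {o a a' : Fin 3 → ℝ} {ho : o ≠ 0} {ha : a ≠ 0} {ha' : a' ≠ 0}
    {hb : a - o ≠ 0} {hb' : a' - o ≠ 0} {C : Projectivization ℝ (Fin 3 → ℝ)}
    (hl : ¬ Col (mk ℝ o ho) (mk ℝ a ha) (mk ℝ a' ha'))
    (hCa : Col (mk ℝ a ha) (mk ℝ a' ha') C) (hCb : Col (mk ℝ (a - o) hb) (mk ℝ (a' - o) hb') C) :
    C.rep ∈ ℝ ∙ (a - a') := by
  rw [col_mk_iff, not_not] at hl
  rw [← mk_rep C, col_mk_iff] at hCa hCb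
  exact mem_span_singleton_sub_of_mem_span_pair hl
    ((linearIndependent_finCons.1 hl).1.not_linearIndependent_triple_iff_mem_span.1 hCa)
    (hl.sub_pair_of_triple.not_linearIndependent_triple_iff_mem_span.1 hCb)

theorem stmt_9_general (O A1 A2 A3 B1 B2 B3 C12 C13 C23 : Projectivization ℝ (Fin 3 → ℝ))
    (hdist : List.Pairwise (· ≠ ·) [O, A1, A2, A3, B1, B2, B3])
    -- perspective from O
    (hp1 : Col O A1 B1) (hp2 : Col O A2 B2) (hp3 : Col O A3 B3)
    -- the three lines through O are distinct
    (hl12 : ¬ Col O A1 A2) (hl13 : ¬ Col O A1 A3) (hl23 : ¬ Col O A2 A3)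
    -- the intersection points of corresponding sides
    (hC12 : Col A1 A2 C12 ∧ Col B1 B2 C12)
    (hC13 : Col A1 A3 C13 ∧ Col B1 B3 C13)
    (hC23 : Col A2 A3 C23 ∧ Col B2 B3 C23) :
    Col C12 C13 C23 := by
  simp only [List.pairwise_cons, List.mem_cons, List.not_mem_nil, forall_eq_or_imp,
    forall_eq, List.Pairwise.nil, or_false] at hdist
  obtain ⟨⟨hOA1, hOA2, hOA3, hOB1, hOB2, hOB3⟩, ⟨-, -, hA1B1, -, -⟩, ⟨-, -, hA2B2, -⟩,
    ⟨-, -, hA3B3⟩, -⟩ := hdist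
  induction O using ind with | h o ho => ?_
  obtain ⟨a1, ha1, hb1, rfl, rfl⟩ := Col.exists_mk_eq_sub ho hp1 hOA1 hOB1 hA1B1
  obtain ⟨a2, ha2, hb2, rfl, rfl⟩ := Col.exists_mk_eq_sub ho hp2 hOA2 hOB2 hA2B2
  obtain ⟨a3, ha3, hb3, rfl, rfl⟩ := Col.exists_mk_eq_sub ho hp3 hOA3 hOB3 hA3B3
  exact not_linearIndependent_of_mem_span_sub (rep_mem_span_sub_of_col hl12 hC12.1 hC12.2)
    (rep_mem_span_sub_of_col hl13 hC13.1 hC13.2) (rep_mem_span_sub_of_col hl23 hC23.1 hC23.2)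

/-- Desargues: if the two triangles A₁A₂A₃ and B₁B₂B₃ are nondegenerate,
perspective from a point O (with all seven points pairwise distinct and the three
perspectivity lines distinct), and corresponding sides lie on distinct lines, then the
three intersection points C₁₂, C₁₃, C₂₃ of corresponding sides are collinear. -/
theorem stmt_9 (O A1 A2 A3 B1 B2 B3 C12 C13 C23 : Projectivization ℝ (Fin 3 → ℝ))
    (hdist : List.Pairwise (· ≠ ·) [O, A1, A2, A3, B1, B2, B3])
    -- perspective from O
    (hp1 : Col O A1 B1) (hp2 : Col O A2 B2) (hp3 : Col O A3 B3)
    -- the three lines through O are distinct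
    (hl12 : ¬ Col O A1 A2) (hl13 : ¬ Col O A1 A3) (hl23 : ¬ Col O A2 A3)
    -- nondegenerate triangles
    (hA : ¬ Col A1 A2 A3) (hB : ¬ Col B1 B2 B3)
    -- corresponding sides lie on distinct lines
    (hs12 : ¬ (Col A1 A2 B1 ∧ Col A1 A2 B2))
    (hs13 : ¬ (Col A1 A3 B1 ∧ Col A1 A3 B3))
    (hs23 : ¬ (Col A2 A3 B2 ∧ Col A2 A3 B3))
    -- the intersection points of corresponding sides
    (hC12 : Col A1 A2 C12 ∧ Col B1 B2 C12)
    (hC13 : Col A1 A3 C13 ∧ Col B1 B3 C13)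
    (hC23 : Col A2 A3 C23 ∧ Col B2 B3 C23) :
    Col C12 C13 C23 :=
  stmt_9_general O A1 A2 A3 B1 B2 B3 C12 C13 C23 hdist hp1 hp2 hp3 hl12 hl13 hl23 hC12 hC13 hC23
end

section
/- With notation as above (Aᵢ' = aᵢA₀ + hAᵢ, A₀' = A₀, E = ΣAᵢ, E' = ΣAᵢ', h ∉ {0,1}, e := a₁+⋯+aₙ+1−h ≠ 0, aᵢ ≠ 0), the vector B₁ := −(e/a₁)A₁ + E lies in both span{A₁, E} and span{A₁', E'}, hence the projective lines π(span{A₁,E}) and π(span{A₁',E'}) meet at π(B₁); moreover π(B₁) lies on the hyperplane {(1−h)x⁰ + aₖxᵏ = 0}. -/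
/-!
Since `E = A₀ + Σ Aᵢ`, the new vector is `E' = e • A₀ + h • E`, and `A₁' = a₁ • A₀ + h • A₁`.
Eliminating `A₀` between these gives `a₁ • E' - e • A₁' = h • (a₁ • E - e • A₁) = h a₁ • B₁`,
so `B₁` lies on both lines as soon as `h a₁ ≠ 0`. In coordinates `B₁ = (1, …, 1) - (e/a₁) A₁`,
and the linear form `(1-h)x⁰ + Σ aₖxᵏ` takes the value `(1 - h) + Σ aₖ - e = 0` on it.
-/

open Finset Submodule

theorem add_sum_smul_add_smul {R V : Type*} [CommRing R] [AddCommGroup V] [Module R V] {n : ℕ}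
    (a : Fin n → R) (h : R) (v : V) (w : Fin n → V) :
    v + ∑ i, (a i • v + h • w i) = ((∑ i, a i) + 1 - h) • v + h • (v + ∑ i, w i) := by
  simp only [sum_add_distrib, ← sum_smul, ← smul_sum]
  module

theorem neg_div_smul_add_mem_span_pair {K V : Type*} [Field K] [AddCommGroup V] [Module K V]
    {a h : K} (ha : a ≠ 0) (hh : h ≠ 0) (c : K) (v w u : V) :
    -(c / a) • w + u ∈ span K {a • v + h • w, c • v + h • u} :=
  mem_span_pair.2 ⟨-(c / (h * a)), 1 / h, by match_scalars <;> field_simp; ring⟩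

theorem sum_mul_smul_single_succ_add_one {K : Type*} [CommRing K] {n : ℕ}
    (a : Fin n → K) (c : K) (j : Fin n) :
    ∑ k, a k * (c • Pi.single j.succ 1 + 1 : Fin (n + 1) → K) k.succ = c * a j + ∑ k, a k := by
  simp [mul_add, sum_add_distrib, Pi.single_apply, Fin.succ_inj, mul_comm]

/-- with A₀' = A₀, Aᵢ' = aᵢA₀ + hAᵢ, E = ΣAᵢ, E' = ΣAᵢ',
e := a₁+⋯+aₙ+1−h ≠ 0, the vector B₁ = −(e/a₁)A₁ + E lies in span{A₁,E} and in
span{A₁',E'}, so the lines A₁E and A₁'E' meet at π(B₁); moreover π(B₁) lies on the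
hyperplane (1−h)x⁰ + aₖxᵏ = 0.  (A₀,…,Aₙ is the standard basis of ℝ^{n+1}.) -/
theorem stmt_15 (n : ℕ) (h : ℝ) (hh0 : h ≠ 0)
    (a : Fin n → ℝ) (ha : ∀ k, a k ≠ 0)
    (ec : ℝ) (hec : ec = (∑ k, a k) + 1 - h)
    (e : Fin (n + 1) → (Fin (n + 1) → ℝ)) (he : ∀ i, e i = Pi.single i 1)
    (A' : Fin n → (Fin (n + 1) → ℝ)) (hA' : ∀ i, A' i = a i • e 0 + h • e i.succ)
    (E E' B1 : Fin (n + 1) → ℝ)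
    (hE : E = ∑ i, e i) (hE' : E' = e 0 + ∑ i : Fin n, A' i)
    (i1 : Fin n)
    (hB1 : B1 = -(ec / a i1) • e i1.succ + E) :
    B1 ≠ 0 ∧
    B1 ∈ Submodule.span ℝ {e i1.succ, E} ∧
    B1 ∈ Submodule.span ℝ {A' i1, E'} ∧
    (1 - h) * B1 0 + ∑ k : Fin n, a k * B1 k.succ = 0 := by
  have hE'_eq : E' = ec • e 0 + h • E := by
    rw [hE', hE, hec, Fin.sum_univ_succ]
    simp only [hA']
    exact add_sum_smul_add_smul a h (e 0) (fun i => e i.succ)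
  have hB1_one : B1 = -(ec / a i1) • Pi.single i1.succ 1 + 1 := by
    rw [hB1, hE, funext he, univ_sum_single]
    rfl
  have hB1_zero : B1 0 = 1 := by simp [hB1_one, (Fin.succ_ne_zero i1).symm]
  refine ⟨fun h0 => by simp [h0] at hB1_zero, ?_, ?_, ?_⟩
  · rw [hB1]
    exact mem_span_pair.2 ⟨-(ec / a i1), 1, by simp⟩
  · rw [hB1, hE'_eq, hA']
    exact neg_div_smul_add_mem_span_pair (ha i1) hh0 ec (e 0) (e i1.succ) E
  · rw [hB1_zero, hB1_one, sum_mul_smul_single_succ_add_one, hec]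
    field_simp [ha i1]
    ring
end

section
/- Let n ≥ 2 and let two adapted projective frames R, R' in P(ℝ^{n+1}) be in strict perspective with transform coefficients (a₁,…,aₙ, h), all aᵢ ≠ 0, h ∉ {0}. Then the set of all the Desargues points B_{ij} = π(aⱼAᵢ − aᵢAⱼ) (1 ≤ i < j ≤ n) and B_i (intersections of lines AᵢE and Aᵢ'E') spans a hyperplane (an (n−1)-dimensional projective subspace) of P(ℝ^{n+1}), namely the one with equation (1−h)x⁰ + aₖxᵏ = 0 in the homogeneous coordinates of the frame R. -/
/-- for two adapted frames in strict perspective with transform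
coefficients (a₁,…,aₙ,h) (all aᵢ ≠ 0, h ≠ 0), the Desargues points
B_{ij} = π(aⱼAᵢ − aᵢAⱼ) (i < j) and B_i = π(−(e/aᵢ)Aᵢ + E) (the intersections of the
lines AᵢE and Aᵢ'E') span the hyperplane (1−h)x⁰ + aₖxᵏ = 0 of P(ℝ^{n+1}): the linear
span of their representative vectors is exactly the n-dimensional subspace with that
equation.  (A₀,…,Aₙ is the standard basis of ℝ^{n+1}, E = ΣAᵢ its unit point vector.) -/
theorem stmt_19 (n : ℕ) (hn : 2 ≤ n) (h : ℝ) (hh0 : h ≠ 0)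
    (a : Fin n → ℝ) (ha : ∀ k, a k ≠ 0)
    (ec : ℝ) (hec : ec = (∑ k, a k) + 1 - h) (hecne : ec ≠ 0)
    (e : Fin (n + 1) → (Fin (n + 1) → ℝ)) (he : ∀ i, e i = Pi.single i 1)
    (A' : Fin n → (Fin (n + 1) → ℝ)) (hA' : ∀ i, A' i = a i • e 0 + h • e i.succ)
    (E E' : Fin (n + 1) → ℝ) (hE : E = ∑ i, e i) (hE' : E' = e 0 + ∑ i : Fin n, A' i)
    (S : Set (Fin (n + 1) → ℝ))
    (hS : S = {v | ∃ i j : Fin n, i < j ∧ v = a j • e i.succ - a i • e j.succ}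
            ∪ {v | ∃ i : Fin n, v = -(ec / a i) • e i.succ + E}) :
    (Submodule.span ℝ S : Set (Fin (n + 1) → ℝ))
      = {x | (1 - h) * x 0 + ∑ k : Fin n, a k * x k.succ = 0} ∧
    Module.finrank ℝ (Submodule.span ℝ S) = n := by
  classical
  have hn0 : 0 < n := by omega
  set i0 : Fin n := ⟨0, hn0⟩ with hi0
  set c : Fin (n+1) → ℝ := Fin.cons (1 - h) a with hc
  set F : (Fin (n + 1) → ℝ) →ₗ[ℝ] ℝ :=
    { toFun := fun x => ∑ i, c i * x i
      map_add' := fun x y => by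
        simp [mul_add, Finset.sum_add_distrib]
      map_smul' := fun r x => by
        simp [Finset.mul_sum, mul_left_comm] } with hF
  have hFapp : ∀ x, F x = ∑ i, c i * x i := fun x => rfl
  have hFe : ∀ i, F (e i) = c i := by
    intro i
    rw [hFapp, he]
    simp [Pi.single_apply]
  have hcsum : ∑ i, c i = ec := by
    rw [Fin.sum_univ_succ]
    simp only [hc, Fin.cons_zero, Fin.cons_succ, hec]
    ring
  have hFE : F E = ec := by
    rw [hE, map_sum]
    simp only [hFe, hcsum]
  have hFx : ∀ x, F x = (1 - h) * x 0 + ∑ k : Fin n, a k * x k.succ := by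
    intro x
    rw [hFapp, Fin.sum_univ_succ]
    simp [hc]
  -- generators lie in the kernel
  have hgen : S ⊆ (LinearMap.ker F : Set (Fin (n+1) → ℝ)) := by
    rw [hS]
    rintro v (⟨i, j, hij, rfl⟩ | ⟨i, rfl⟩)
    · simp only [SetLike.mem_coe, LinearMap.mem_ker, map_sub, map_smul, hFe, hc,
        Fin.cons_succ, smul_eq_mul]
      ring
    · simp only [SetLike.mem_coe, LinearMap.mem_ker, map_add, map_smul, hFe, hFE, hc,
        Fin.cons_succ, smul_eq_mul]
      rw [neg_mul, div_mul_cancel₀ ec (ha i), neg_add_cancel]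
  -- the special vectors
  set B0 : Fin (n+1) → ℝ := -(ec / a i0) • e i0.succ + E with hB0
  have hB0S : B0 ∈ S := by rw [hS]; exact Or.inr ⟨i0, rfl⟩
  set Bv : Fin n → (Fin (n+1) → ℝ) := fun j => a j • e i0.succ - a i0 • e j.succ with hBv
  have hBvS : ∀ j : Fin n, j ≠ i0 → Bv j ∈ S := by
    intro j hj
    rw [hS]
    refine Or.inl ⟨i0, j, ?_, rfl⟩
    rw [Fin.lt_def]
    have : (j : ℕ) ≠ 0 := fun hv => hj (Fin.ext (by simp [hi0, hv]))
    simp [hi0]; omega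
  have hB00 : B0 0 = 1 := by
    rw [hB0, hE]
    simp [he, Pi.single_apply, (Fin.succ_ne_zero i0).symm, Finset.sum_ite_eq]
  -- reverse inclusion
  have hrev : LinearMap.ker F ≤ Submodule.span ℝ S := by
    intro x hx
    rw [LinearMap.mem_ker] at hx
    set y : Fin (n+1) → ℝ := x - x 0 • B0 with hy
    have hy0 : y 0 = 0 := by simp [hy, hB00]
    have hFB0 : F B0 = 0 := hgen hB0S
    have hFy : F y = 0 := by
      rw [hy, map_sub, map_smul, hx, hFB0]; simp
    have hsum : ∑ j : Fin n, a j * y j.succ = 0 := by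
      have := hFx y
      rw [hFy, hy0] at this
      linarith [this]
    have hsum' : ∑ j ∈ Finset.univ.erase i0, a j * y j.succ = -(a i0 * y i0.succ) := by
      have h2 : a i0 * y i0.succ + ∑ j ∈ Finset.univ.erase i0, a j * y j.succ
          = ∑ j : Fin n, a j * y j.succ :=
        Finset.add_sum_erase Finset.univ (fun j => a j * y j.succ) (Finset.mem_univ i0)
      rw [hsum] at h2
      linarith
    have hyeq : y = ∑ j ∈ Finset.univ.erase i0, (-(y j.succ) / a i0) • Bv j := by
      funext k
      induction k using Fin.cases with
      | zero =>
        rw [hy0]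
        rw [Finset.sum_apply]
        simp [hBv, he, Pi.single_apply, (Fin.succ_ne_zero i0).symm,
          (Fin.succ_ne_zero _).symm]
      | succ m =>
        rw [Finset.sum_apply]
        simp only [hBv, Pi.smul_apply, Pi.sub_apply, he, Pi.single_apply, smul_eq_mul]
        by_cases hm : m = i0
        · have hstep : ∀ j ∈ Finset.univ.erase i0, -y j.succ / a i0 *
              ((a j * if m.succ = i0.succ then (1:ℝ) else 0) -
               a i0 * if m.succ = j.succ then (1:ℝ) else 0) =
              -y j.succ / a i0 * a j := by
            intro j hj
            have hjm : j ≠ i0 := (Finset.mem_erase.mp hj).1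
            have hne : i0.succ ≠ j.succ := fun hh => (hjm (Fin.succ_injective _ hh).symm)
            simp [hm, hne]
          rw [Finset.sum_congr rfl hstep]
          have hfac : ∑ j ∈ Finset.univ.erase i0, -y j.succ / a i0 * a j =
              (-1 / a i0) * ∑ j ∈ Finset.univ.erase i0, a j * y j.succ := by
            rw [Finset.mul_sum]
            exact Finset.sum_congr rfl fun j _ => by ring
          rw [hfac, hsum', hm]
          have hq : -1 / a i0 * -(a i0 * y i0.succ) = a i0 / a i0 * y i0.succ := by ring
          rw [hq, div_self (ha i0), one_mul]
        · have h1 : m.succ ≠ i0.succ := fun hh => hm (Fin.succ_injective _ hh)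
          have hstep : ∀ j ∈ Finset.univ.erase i0, -y j.succ / a i0 *
              ((a j * if m.succ = i0.succ then (1:ℝ) else 0) -
               a i0 * if m.succ = j.succ then (1:ℝ) else 0) =
              (if j = m then -y j.succ / a i0 * (- a i0) else 0) := by
            intro j hj
            by_cases hjm : j = m
            · simp [hjm, h1]
            · have hne : m.succ ≠ j.succ := fun hh => hjm (Fin.succ_injective _ hh).symm
              simp [h1, hne, hjm]
          rw [Finset.sum_congr rfl hstep, Finset.sum_ite_eq' (Finset.univ.erase i0) m]
          have hmem : m ∈ Finset.univ.erase i0 := Finset.mem_erase.mpr ⟨hm, Finset.mem_univ m⟩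
          rw [if_pos hmem]
          have hq : -y m.succ / a i0 * (- a i0) = a i0 / a i0 * y m.succ := by ring
          rw [hq, div_self (ha i0), one_mul]
    have hxeq : x = x 0 • B0 + ∑ j ∈ Finset.univ.erase i0, (-(y j.succ) / a i0) • Bv j := by
      rw [← hyeq, hy]; abel
    rw [hxeq]
    refine Submodule.add_mem _ (Submodule.smul_mem _ _ (Submodule.subset_span hB0S)) ?_
    exact Submodule.sum_mem _ fun j hj => Submodule.smul_mem _ _
      (Submodule.subset_span (hBvS j (Finset.mem_erase.mp hj).1))
  have key : Submodule.span ℝ S = LinearMap.ker F :=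
    le_antisymm (Submodule.span_le.mpr hgen) hrev
  constructor
  · rw [key]
    ext x
    simp only [SetLike.mem_coe, LinearMap.mem_ker, Set.mem_setOf_eq, hFx]
  · rw [key]
    have hsurj : Function.Surjective F := by
      intro r
      refine ⟨(r / a i0) • e i0.succ, ?_⟩
      rw [map_smul, hFe]
      simp only [hc, Fin.cons_succ, smul_eq_mul]
      exact div_mul_cancel₀ r (ha i0)
    have hrank := LinearMap.finrank_range_add_finrank_ker F
    rw [LinearMap.range_eq_top.mpr hsurj] at hrank
    simp only [finrank_top, Module.finrank_self, Module.finrank_fin_fun] at hrank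
    omega
end
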